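/- arXiv:1202.5619 — 3 statements merged into one kernel-verified Lean document; each statement's English description precedes it below -/
import Mathlib

section
/- For every n ≥ 2, there exists a metric graph G on n vertices with weights in (0,1] such that the cost of the infinite walk obtained by repeating a TSP tour of G is at least (n−1)·OPT_G. -/
open scoped ENNReal BigOperators

/-- Total edge length of the segment of the infinite walk `W` from index `a` to `b`. -/
noncomputable def walkLen {V : Type*} (l : V → V → ℝ≥0∞) (W : ℕ → V) (a b : ℕ) : ℝ≥0∞ :=
  ∑ i ∈ Finset.Ico a b, l (W i) (W (i + 1))

/-- The walk visits every vertex infinitely often. -/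
def VisitsInfOften {V : Type*} (W : ℕ → V) : Prop :=
  ∀ v : V, ∀ N : ℕ, ∃ a : ℕ, N ≤ a ∧ W a = v

/-- Latency of vertex `v` on infinite walk `W`: the supremum, over visits to `v`,
of the length of the sub-walk until the next visit to `v`. -/
noncomputable def latency {V : Type*} (l : V → V → ℝ≥0∞) (W : ℕ → V) (v : V) : ℝ≥0∞ :=
  ⨆ (a : ℕ) (_ : W a = v), ⨅ (b : ℕ) (_ : a < b ∧ W b = v), walkLen l W a b

/-- Cost of an infinite walk: the maximum weighted latency over all vertices. -/
noncomputable def walkCost {V : Type*} (l : V → V → ℝ≥0∞) (φ : V → ℝ≥0∞) (W : ℕ → V) : ℝ≥0∞ :=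
  ⨆ v : V, φ v * latency l W v

/-- Optimal cost over all infinite walks (complete graph) visiting all vertices
infinitely often. -/
noncomputable def OPT {V : Type*} (l : V → V → ℝ≥0∞) (φ : V → ℝ≥0∞) : ℝ≥0∞ :=
  ⨅ (W : ℕ → V) (_ : VisitsInfOften W), walkCost l φ W

/-!
The graph is the star with centre `0` of radius `0` and leaves of radius `1`, at distance
`d u v = r u + r v` (the metric closure of the paper's graph); the centre has weight `1`, the
`m + 1` leaves weight `1 / (m + 1)`. Every Hamiltonian cycle uses each vertex as an endpoint of
two edges, so all tours have length `2 ∑ r = 2 (m + 1)` and the identity is a shortest one;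
repeating it, the centre waits `2 (m + 1)` between visits. The walk `0, 1, 0, 2, …, 0, m + 1, …`
instead returns to the centre every `2` and to each leaf every `2 (m + 1)`, so `OPT ≤ 2`.
-/

section Walks

variable {V : Type*} (l : V → V → ℝ≥0∞) (W : ℕ → V)

lemma walkLen_mono_right {a b b' : ℕ} (h : b ≤ b') : walkLen l W a b ≤ walkLen l W a b' :=
  Finset.sum_le_sum_of_subset (Finset.Ico_subset_Ico_right h)

lemma walkLen_le_of_edge_le {c : ℝ≥0∞} (h : ∀ i, l (W i) (W (i + 1)) ≤ c) (a b : ℕ) :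
    walkLen l W a b ≤ (b - a : ℕ) * c :=
  calc walkLen l W a b ≤ ∑ _i ∈ Finset.Ico a b, c := Finset.sum_le_sum fun i _ => h i
    _ = (b - a : ℕ) * c := by simp

lemma le_latency {v : V} {a : ℕ} {C : ℝ≥0∞} (ha : W a = v)
    (h : ∀ b, a < b → W b = v → C ≤ walkLen l W a b) : C ≤ latency l W v :=
  le_iSup₂_of_le a ha <| le_iInf₂ fun b hb => h b hb.1 hb.2

lemma latency_le_of_edge_le_one_of_return (hedge : ∀ i, l (W i) (W (i + 1)) ≤ 1) {v : V}
    {p : ℕ} (hp : 0 < p) (hW : ∀ a, W a = v → W (a + p) = v) : latency l W v ≤ p :=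
  iSup₂_le fun a ha => iInf₂_le_of_le (a + p) ⟨by omega, hW a ha⟩ <| by
    simpa using walkLen_le_of_edge_le l W hedge a (a + p)

lemma mul_latency_le_walkCost (φ : V → ℝ≥0∞) (v : V) :
    φ v * latency l W v ≤ walkCost l φ W :=
  le_iSup (fun v => φ v * latency l W v) v

lemma OPT_le_walkCost (φ : V → ℝ≥0∞) (hW : VisitsInfOften W) :
    OPT l φ ≤ walkCost l φ W :=
  iInf₂_le W hW

end Walks

section Tours

variable {V : Type*} (l : V → V → ℝ≥0∞) {n : ℕ} [NeZero n] (e : Fin n → V)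

noncomputable def tourLength : ℝ≥0∞ := ∑ i, l (e i) (e (i + 1))

def tourWalk : ℕ → V := fun i => e (Fin.ofNat n i)

lemma walkLen_tourWalk : walkLen l (tourWalk e) 0 n = tourLength l e := by
  have hsucc (i : ℕ) : Fin.ofNat n (i + 1) = Fin.ofNat n i + 1 := by
    simp [Fin.ext_iff, Fin.val_add, Nat.add_mod]
  simp only [walkLen, tourWalk, tourLength, hsucc, ← Finset.range_eq_Ico]
  rw [← Fin.sum_univ_eq_sum_range fun i => l (e (Fin.ofNat n i)) (e (Fin.ofNat n i + 1))]
  simp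

lemma tourLength_le_latency (he : Function.Injective e) :
    tourLength l e ≤ latency l (tourWalk e) (e 0) := by
  refine le_latency l _ (a := 0) rfl fun b hb hWb => ?_
  have hnb : n ≤ b := by
    have : b % n = 0 := by simpa [Fin.ext_iff] using he hWb
    exact Nat.le_of_dvd hb (Nat.dvd_of_mod_eq_zero this)
  exact walkLen_tourWalk l e ▸ walkLen_mono_right l _ hnb

end Tours

section StarMetric

variable {V : Type*} [DecidableEq V] (r : V → ℝ≥0∞)

def starDist (u v : V) : ℝ≥0∞ := if u = v then 0 else r u + r v

@[simp] lemma starDist_self (v : V) : starDist r v v = 0 := if_pos rfl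

lemma starDist_of_ne {u v : V} (h : u ≠ v) : starDist r u v = r u + r v := if_neg h

lemma starDist_le_add (u v : V) : starDist r u v ≤ r u + r v := by
  unfold starDist; split_ifs <;> simp

lemma starDist_comm (u v : V) : starDist r u v = starDist r v u := by
  by_cases h : u = v
  · rw [h]
  · rw [starDist_of_ne r h, starDist_of_ne r (Ne.symm h), add_comm]

lemma starDist_triangle (u v w : V) : starDist r u w ≤ starDist r u v + starDist r v w := by
  by_cases huv : u = v
  · simp [huv]
  by_cases hvw : v = w
  · simp [hvw]
  calc starDist r u w ≤ r u + r w := starDist_le_add r u w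
    _ ≤ (r u + r v) + (r v + r w) := add_le_add le_self_add le_add_self
    _ = starDist r u v + starDist r v w := by rw [starDist_of_ne r huv, starDist_of_ne r hvw]

lemma tourLength_starDist [Fintype V] {n : ℕ} (e : Fin (n + 2) ≃ V) :
    tourLength (starDist r) e = 2 * ∑ v, r v := by
  have hne (i : Fin (n + 2)) : e i ≠ e (i + 1) :=
    e.injective.ne fun h => one_ne_zero (add_eq_left.mp h.symm)
  calc tourLength (starDist r) e = ∑ i, (r (e i) + r (e (i + 1))) :=
        Finset.sum_congr rfl fun i _ => starDist_of_ne r (hne i)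
    _ = ∑ i, r (e i) + ∑ i, r (e (Equiv.addRight 1 i)) := Finset.sum_add_distrib
    _ = 2 * ∑ v, r v := by
        rw [Equiv.sum_comp (Equiv.addRight 1) fun i => r (e i), Equiv.sum_comp, two_mul]

end StarMetric

section Star

variable (m : ℕ)

noncomputable def starRadius (v : Fin (m + 2)) : ℝ≥0∞ := if v = 0 then 0 else 1

noncomputable def starWeight (v : Fin (m + 2)) : ℝ≥0∞ :=
  if v = 0 then 1 else (m + 1 : ℝ≥0∞)⁻¹

def starWalk (j : ℕ) : Fin (m + 2) := if j % 2 = 0 then 0 else (Fin.ofNat (m + 1) (j / 2)).succ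

lemma starRadius_le_one (v : Fin (m + 2)) : starRadius m v ≤ 1 := by
  unfold starRadius; split_ifs <;> simp

lemma sum_starRadius : ∑ v, starRadius m v = m + 1 := by
  simp [Fin.sum_univ_succ, starRadius]

lemma starDist_starRadius_pos_and_ne_top {u v : Fin (m + 2)} (h : u ≠ v) :
    0 < starDist (starRadius m) u v ∧ starDist (starRadius m) u v ≠ ⊤ := by
  rw [starDist_of_ne _ h]
  refine ⟨?_, ENNReal.add_ne_top.mpr ⟨?_, ?_⟩⟩
  · by_cases hu : u = 0
    · have hv : v ≠ 0 := fun hv => h (hu.trans hv.symm)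
      simp [starRadius, hv]
    · simp [starRadius, hu]
  all_goals exact ne_top_of_le_ne_top ENNReal.one_ne_top (starRadius_le_one m _)

lemma starWeight_pos_le_one (v : Fin (m + 2)) : 0 < starWeight m v ∧ starWeight m v ≤ 1 := by
  unfold starWeight
  split_ifs
  · simp
  · exact ⟨ENNReal.inv_pos.mpr (by simp), ENNReal.inv_le_one.mpr le_add_self⟩

lemma starWalk_eq_zero_iff (j : ℕ) : starWalk m j = 0 ↔ j % 2 = 0 := by
  unfold starWalk; split_ifs with h <;> simp [h, Fin.succ_ne_zero]

lemma starWalk_periodic : Function.Periodic (starWalk m) (2 * (m + 1)) := by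
  intro j
  have hmod : (j + 2 * (m + 1)) % 2 = j % 2 := by omega
  have hdiv : (j + 2 * (m + 1)) / 2 = j / 2 + (m + 1) := by omega
  have hofNat : Fin.ofNat (m + 1) (j / 2 + (m + 1)) = Fin.ofNat (m + 1) (j / 2) := by
    simp [Fin.ext_iff]
  simp only [starWalk, hmod, hdiv, hofNat]

lemma starDist_starWalk_le_one (j : ℕ) :
    starDist (starRadius m) (starWalk m j) (starWalk m (j + 1)) ≤ 1 := by
  refine (starDist_le_add _ _ _).trans ?_
  rcases Nat.mod_two_eq_zero_or_one j with h | h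
  · rw [(starWalk_eq_zero_iff m j).mpr h]
    simpa [starRadius] using starRadius_le_one m _
  · rw [(starWalk_eq_zero_iff m (j + 1)).mpr (by omega)]
    simpa [starRadius] using starRadius_le_one m _

lemma visitsInfOften_starWalk : VisitsInfOften (starWalk m) := by
  intro v N
  induction v using Fin.cases with
  | zero => exact ⟨2 * N, by omega, (starWalk_eq_zero_iff m _).mpr (by omega)⟩
  | succ k =>
    refine ⟨2 * (k + (m + 1) * N) + 1, by nlinarith, ?_⟩
    have hdiv : (2 * (k + (m + 1) * N) + 1) / 2 = k + (m + 1) * N := by omega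
    simp [starWalk, hdiv, Fin.ext_iff, Nat.mod_eq_of_lt k.isLt]

lemma walkCost_starWalk_le_two :
    walkCost (starDist (starRadius m)) (starWeight m) (starWalk m) ≤ 2 := by
  have hedge := starDist_starWalk_le_one m
  refine iSup_le fun v => ?_
  by_cases hv : v = 0
  · have hreturn (a : ℕ) (ha : starWalk m a = v) : starWalk m (a + 2) = v := by
      rw [hv, starWalk_eq_zero_iff] at *
      omega
    have hlat := latency_le_of_edge_le_one_of_return _ _ hedge two_pos hreturn
    simpa [starWeight, hv] using hlat
  · have hlat := latency_le_of_edge_le_one_of_return _ _ hedge (by omega : 0 < 2 * (m + 1))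
      fun a (ha : starWalk m a = v) => (starWalk_periodic m a).trans ha
    calc starWeight m v * latency (starDist (starRadius m)) (starWalk m) v
        ≤ (m + 1 : ℝ≥0∞)⁻¹ * (2 * (m + 1)) := by
          rw [starWeight, if_neg hv]; gcongr; exact_mod_cast hlat
      _ = 2 := by rw [mul_comm, mul_assoc, ENNReal.mul_inv_cancel (by simp) (by simp), mul_one]

end Star

/-- For every n ≥ 2 there is a metric graph on n vertices such that the infinite walk
obtained by repeating a shortest TSP tour has cost at least (n-1)·OPT. -/
theorem tsp_tour_bad_approximation (m : ℕ) :
    ∃ (l : Fin (m + 2) → Fin (m + 2) → ℝ≥0∞) (φ : Fin (m + 2) → ℝ≥0∞)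
      (e : Fin (m + 2) ≃ Fin (m + 2)),
      (∀ v, l v v = 0) ∧ (∀ u v, l u v = l v u) ∧
      (∀ u v w, l u w ≤ l u v + l v w) ∧
      (∀ u v, u ≠ v → 0 < l u v ∧ l u v ≠ ⊤) ∧
      (∀ v, 0 < φ v ∧ φ v ≤ 1) ∧
      (∀ e' : Fin (m + 2) ≃ Fin (m + 2),
        ∑ i : Fin (m + 2), l (e i) (e (i + 1)) ≤ ∑ i : Fin (m + 2), l (e' i) (e' (i + 1))) ∧
      ((m + 1 : ℝ≥0∞)) * OPT l φ ≤
        walkCost l φ (fun i : ℕ => e (Fin.ofNat (m + 2) i)) := by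
  set l := starDist (starRadius m)
  set e := Equiv.refl (Fin (m + 2))
  have htour (e' : Fin (m + 2) ≃ Fin (m + 2)) : tourLength l e' = 2 * (m + 1) := by
    rw [tourLength_starDist, sum_starRadius]
  refine ⟨l, starWeight m, e, starDist_self _, starDist_comm _, starDist_triangle _,
    fun u v => starDist_starRadius_pos_and_ne_top m, starWeight_pos_le_one m,
    fun e' => (htour e).trans_le (htour e').ge, ?_⟩
  calc (m + 1 : ℝ≥0∞) * OPT l (starWeight m)
      ≤ (m + 1) * 2 :=
        mul_le_mul_right ((OPT_le_walkCost _ _ _ (visitsInfOften_starWalk m)).trans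
          (walkCost_starWalk_le_two m)) _
    _ = tourLength l e := by rw [htour, mul_comm]
    _ ≤ starWeight m (e 0) * latency l (tourWalk e) (e 0) := by
        simpa [starWeight, e] using tourLength_le_latency l e e.injective
    _ ≤ walkCost l (starWeight m) (tourWalk e) := mul_latency_le_walkCost _ _ _ _
end

section
/- Let G' be a relaxed metric graph and S = [S_1, ..., S_t] a binary walk such that every S_k has length at most c and every S_k begins at a vertex of weight 1. Then the cost of the infinite expansion Δ(S) in G' is at most 2c + OPT_{G'}. -/
open scoped ENNReal BigOperators

/-!
Fix a vertex `v` of weight `2⁻ˣ`. By the binary property, from any visit to `v` the walk visits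
`v` again before the phase counter `β` has advanced by `2ˣ⁺¹`. Such a stretch consists of at most
`2ˣ⁺¹` members of the decomposition, each of length at most `c`, joined by fewer than `2ˣ⁺¹` edges.
Every joining edge ends at a vertex of weight 1, and any vertex `u` is within `OPT / 2` of a vertex
`z` of weight 1: an optimal walk must go from `z` to `u` and back to `z` between two visits to `z`.
Hence the latency of `v` is at most `2ˣ⁺¹ (c + OPT / 2)`, and its weighted latency at most
`2c + OPT`.
-/

section Walk

variable {V : Type*} (l : V → V → ℝ≥0∞) (W : ℕ → V)

lemma walkLen_add {a m b : ℕ} (h₁ : a ≤ m) (h₂ : m ≤ b) :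
    walkLen l W a b = walkLen l W a m + walkLen l W m b :=
  (Finset.sum_Ico_consecutive _ h₁ h₂).symm

lemma walkLen_succ_right {a b : ℕ} (h : a ≤ b) :
    walkLen l W a (b + 1) = walkLen l W a b + l (W b) (W (b + 1)) :=
  Finset.sum_Ico_succ_top h _

lemma latency_le {v : V} {C : ℝ≥0∞}
    (h : ∀ a, W a = v → ∃ b, a < b ∧ W b = v ∧ walkLen l W a b ≤ C) :
    latency l W v ≤ C :=
  iSup₂_le fun a ha => by
    obtain ⟨b, hab, hbv, hC⟩ := h a ha
    exact (iInf₂_le b ⟨hab, hbv⟩).trans hC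

variable {β : ℕ → ℕ}

lemma exists_phase_exit (hmono : Monotone β) (hstep : ∀ i, β (i + 1) ≤ β i + 1)
    {a b : ℕ} (hab : a ≤ b) (hlt : β a < β b) :
    ∃ i, a ≤ i ∧ i < b ∧ β i = β a ∧ β (i + 1) = β a + 1 := by
  induction b, hab using Nat.le_induction with
  | base => omega
  | succ b hab ih =>
    by_cases h : β a < β b
    · obtain ⟨i, hai, hib, hi⟩ := ih h
      exact ⟨i, hai, hib.trans b.lt_succ_self, hi⟩
    · have := hmono hab
      have := hstep b
      exact ⟨b, hab, b.lt_succ_self, by omega, by omega⟩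

lemma walkLen_le_of_phases (hmono : Monotone β) (hstep : ∀ i, β (i + 1) ≤ β i + 1)
    {c D : ℝ≥0∞} (hphase : ∀ a b, a ≤ b → β b = β a → walkLen l W a b ≤ c)
    (hexit : ∀ i, β (i + 1) = β i + 1 → l (W i) (W (i + 1)) ≤ D) :
    ∀ n a b, a ≤ b → β b < β a + n → walkLen l W a b ≤ n * (c + D)
  | 0, a, b, hab, hβ => by
    have := hmono hab
    omega
  | n + 1, a, b, hab, hβ => by
    obtain hβab | hβab := (hmono hab).eq_or_lt
    · calc walkLen l W a b ≤ c := hphase a b hab hβab.symm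
        _ ≤ c + D := le_self_add
        _ ≤ (n + 1 : ℕ) * (c + D) := le_mul_of_one_le_left' (by norm_cast; omega)
    · obtain ⟨i, hai, hib, hi, hi₁⟩ := exists_phase_exit hmono hstep hab hβab
      calc walkLen l W a b
          = walkLen l W a i + l (W i) (W (i + 1)) + walkLen l W (i + 1) b := by
            rw [walkLen_add l W (by omega : a ≤ i + 1) hib, walkLen_succ_right l W hai]
        _ ≤ c + D + n * (c + D) := by
            gcongr
            · exact hphase a i hai hi
            · exact hexit i (by omega)
            · exact walkLen_le_of_phases hmono hstep hphase hexit n (i + 1) b hib (by omega)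
        _ = (n + 1 : ℕ) * (c + D) := by push_cast; ring

lemma exists_next_visit (hmono : Monotone β) {v : V} {m : ℕ} (hm : 0 < m)
    (hvisit : ∀ j, ∃ b, W b = v ∧ j * m ≤ β b ∧ β b < (j + 1) * m) (a : ℕ) :
    ∃ b, a < b ∧ W b = v ∧ β b < β a + 2 * m := by
  obtain ⟨b, hbv, hlo, hhi⟩ := hvisit (β a / m + 1)
  have hdiv := Nat.div_add_mod (β a) m
  have hmod := Nat.mod_lt (β a) hm
  generalize β a / m = q, β a % m = r at *
  refine ⟨b, ?_, hbv, by linarith⟩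
  by_contra! hba
  have := hmono hba
  linarith

end Walk

section Metric

variable {V : Type*} [PseudoEMetricSpace V]

lemma edist_le_walkLen (W : ℕ → V) {a b : ℕ} (hab : a ≤ b) :
    edist (W a) (W b) ≤ walkLen (fun x y => edist x y) W a b := by
  induction b, hab using Nat.le_induction with
  | base => simp [walkLen]
  | succ b hab ih =>
    rw [walkLen_succ_right _ _ hab]
    exact (edist_triangle _ _ _).trans (by gcongr)

lemma two_mul_edist_le_latency {W : ℕ → V} (hW : VisitsInfOften W) (v z : V) :
    2 * edist v z ≤ latency (fun x y => edist x y) W z := by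
  classical
  obtain ⟨a₀, -, ha₀⟩ := hW z 0
  obtain ⟨m, ham, hm⟩ := hW v a₀
  set A := Nat.findGreatest (fun i => W i = z) m
  have hAz : W A = z := Nat.findGreatest_spec (P := fun i => W i = z) ham ha₀
  have hAm : A ≤ m := Nat.findGreatest_le m
  rw [latency]
  refine le_iSup₂_of_le A hAz (le_iInf₂ fun b ⟨hAb, hbz⟩ => ?_)
  have hmb : m < b := by
    by_contra! h
    exact Nat.findGreatest_is_greatest hAb h hbz
  rw [walkLen_add _ _ hAm hmb.le, two_mul]
  gcongr
  · rw [edist_comm, ← hAz, ← hm]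
    exact edist_le_walkLen W hAm
  · rw [← hm, ← hbz]
    exact edist_le_walkLen W hmb.le

lemma mul_two_mul_edist_le_OPT (φ : V → ℝ≥0∞) (v z : V) :
    φ z * (2 * edist v z) ≤ OPT (fun x y => edist x y) φ :=
  le_iInf₂ fun W hW =>
    calc φ z * (2 * edist v z) ≤ φ z * latency (fun x y => edist x y) W z := by
          gcongr
          exact two_mul_edist_le_latency hW v z
      _ ≤ walkCost (fun x y => edist x y) φ W :=
          le_iSup (fun u => φ u * latency (fun x y => edist x y) W u) z

end Metric

theorem binary_walk_cost_bound_general {V : Type*} [MetricSpace V]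
    (φ : V → ℝ≥0∞)
    (hpow : ∀ u : V, ∃ x : ℕ, φ u = (1/2 : ℝ≥0∞) ^ x)
    (W : ℕ → V) (β : ℕ → ℕ) (t : ℕ)
    (hmono : Monotone β) (hstep : ∀ i, β (i + 1) ≤ β i + 1)
    (hbin : ∀ (u : V) (x : ℕ), φ u = (1/2 : ℝ≥0∞) ^ x →
      2 ^ x ≤ t ∧ ∀ j : ℕ, ∃! a : ℕ, W a = u ∧ j * 2 ^ x ≤ β a ∧ β a < (j + 1) * 2 ^ x)
    (c : ℝ≥0∞)
    (hlen : ∀ a b : ℕ, a ≤ b → β b = β a → walkLen (fun x y => edist x y) W a b ≤ c)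
    (hstart : ∀ i, β (i + 1) = β i + 1 → φ (W (i + 1)) = 1) :
    walkCost (fun x y => edist x y) φ W ≤ 2 * c + OPT (fun x y => edist x y) φ := by
  set Z := OPT (fun x y => edist x y) φ
  have hexit : ∀ i, β (i + 1) = β i + 1 → edist (W i) (W (i + 1)) ≤ Z / 2 := fun i hi => by
    rw [ENNReal.le_div_iff_mul_le (.inl two_ne_zero) (.inl ENNReal.ofNat_ne_top), mul_comm]
    simpa [hstart i hi] using mul_two_mul_edist_le_OPT φ (W i) (W (i + 1))
  refine iSup_le fun v => ?_
  obtain ⟨x, hx⟩ := hpow v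
  have hvisit j := ((hbin v x hx).2 j).exists
  have hlat : latency (fun x y => edist x y) W v ≤ (2 * 2 ^ x : ℕ) * (c + Z / 2) :=
    latency_le _ _ fun a _ => by
      obtain ⟨b, hab, hbv, hβb⟩ := exists_next_visit W hmono (by positivity) hvisit a
      exact ⟨b, hab, hbv, walkLen_le_of_phases _ _ hmono hstep hlen hexit _ a b hab.le hβb⟩
  calc φ v * latency (fun x y => edist x y) W v
      ≤ (1 / 2) ^ x * ((2 * 2 ^ x : ℕ) * (c + Z / 2)) := by rw [hx]; gcongr
    _ = (1 / 2 * 2) ^ x * (2 * c + 2 * (Z / 2)) := by push_cast; ring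
    _ = 2 * c + Z := by
      rw [ENNReal.div_mul_cancel two_ne_zero ENNReal.ofNat_ne_top, one_pow, one_mul,
        ENNReal.mul_div_cancel two_ne_zero ENNReal.ofNat_ne_top]

/-- Binary property: if every member of the binary decomposition has length at most c
and begins at a vertex of weight 1, then the cost of the expansion is at most
2c + OPT. -/
theorem binary_walk_cost_bound {V : Type*} [MetricSpace V] [Fintype V]
    (φ : V → ℝ≥0∞)
    (hpow : ∀ u : V, ∃ x : ℕ, φ u = (1/2 : ℝ≥0∞) ^ x)
    (hone : ∃ u : V, φ u = 1)
    (W : ℕ → V) (β : ℕ → ℕ) (t p : ℕ) (ht : 0 < t) (hp : 0 < p)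
    (hβ0 : β 0 = 0) (hmono : Monotone β) (hstep : ∀ i, β (i + 1) ≤ β i + 1)
    (hper : ∀ i, W (i + p) = W i ∧ β (i + p) = β i + t)
    (hbin : ∀ (u : V) (x : ℕ), φ u = (1/2 : ℝ≥0∞) ^ x →
      2 ^ x ≤ t ∧ ∀ j : ℕ, ∃! a : ℕ, W a = u ∧ j * 2 ^ x ≤ β a ∧ β a < (j + 1) * 2 ^ x)
    (c : ℝ≥0∞)
    (hlen : ∀ a b : ℕ, a ≤ b → β b = β a → walkLen (fun x y => edist x y) W a b ≤ c)
    (hstart0 : φ (W 0) = 1)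
    (hstart : ∀ i, β (i + 1) = β i + 1 → φ (W (i + 1)) = 1) :
    walkCost (fun x y => edist x y) φ W ≤ 2 * c + OPT (fun x y => edist x y) φ :=
  binary_walk_cost_bound_general φ hpow W β t hmono hstep hbin c hlen hstart
end

section
/- For every constant k and every n = sk, there exists a graph G on n vertices with unit edge lengths such that OPT_G ≤ 1, but every infinite walk in G of cost at most 1 has a kernel (shortest finite walk whose repetition equals the walk) of size at least (s+1)^{k−1}. -/
open scoped ENNReal BigOperators

/-- Optimal cost over infinite walks respecting the adjacency relation A. -/
noncomputable def OPTg {V : Type*} (A : V → V → Prop) (l : V → V → ℝ≥0∞)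
    (φ : V → ℝ≥0∞) : ℝ≥0∞ :=
  ⨅ (W : ℕ → V) (_ : (∀ i, A (W i) (W (i + 1))) ∧ VisitsInfOften W), walkCost l φ W

/-!
Take the complete graph with unit lengths on `Fin s × Fin k`, vertex `(d, j)` having weight
`(s + 1)^-(j+1)`. The ruler walk, which at time `t` visits class `j` = the number of trailing
digits `s` of `t` in base `s + 1` (capped at `k - 1`) and within it the vertex named by the next
digit, revisits every class-`j` vertex after `(s + 1)^(j+1)` steps, so it has cost `1`.

Conversely, in a walk of cost at most `1` and period `p` a class-`j` vertex has latency at most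
`(s + 1)^(j+1)`, so it is visited at least `p (s + 1)^-(j+1)` times, and at least once, per
period. The classes `j < k - 1` then use all but `p (s + 1)^-(k-1)` of the `p` steps, and the
remainder must hold the `s` vertices of the top class: `p ≥ s (s + 1)^(k-1)`.
-/

open Finset Function

section Walks

variable {V : Type*}

lemma walkLen_one (W : ℕ → V) (a b : ℕ) : walkLen (fun _ _ => 1) W a b = (b - a : ℕ) := by
  rw [walkLen, sum_const, Nat.card_Ico, nsmul_one]

lemma walkCost_le_one_iff {l : V → V → ℝ≥0∞} {φ : V → ℝ≥0∞} {W : ℕ → V}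
    (hφ₀ : ∀ v, φ v ≠ 0) (hφ : ∀ v, φ v ≠ ∞) :
    walkCost l φ W ≤ 1 ↔ ∀ v, latency l W v ≤ (φ v)⁻¹ := by
  simp only [walkCost, iSup_le_iff, ENNReal.mul_le_iff_le_inv (hφ₀ _) (hφ _), mul_one]

lemma latency_le_of_forall_add {W : ℕ → V} {v : V} {G : ℕ} (hG : 0 < G)
    (h : ∀ a, W a = v → W (a + G) = v) : latency (fun _ _ => 1) W v ≤ G :=
  iSup₂_le fun a ha => iInf₂_le_of_le (a + G) ⟨by omega, h a ha⟩ (by simp [walkLen_one])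

lemma exists_visit_le_add_of_latency_le {W : ℕ → V} {v : V} {G : ℕ}
    (h : latency (fun _ _ => 1) W v ≤ G) {a : ℕ} (ha : W a = v) :
    ∃ b, a < b ∧ b ≤ a + G ∧ W b = v := by
  by_contra! hno
  have : ((G + 1 : ℕ) : ℝ≥0∞) ≤ latency (fun _ _ => 1) W v :=
    le_iSup₂_of_le a ha <| le_iInf₂ fun b ⟨hab, hb⟩ => by
      rw [walkLen_one, Nat.cast_le]
      by_contra!
      exact hno b hab (by omega) hb
  exact absurd (this.trans h) (by norm_cast; omega)

lemma Function.Periodic.visitsInfOften {W : ℕ → V} {p : ℕ} (hper : Periodic W p) (hp : 0 < p)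
    (hW : Surjective W) : VisitsInfOften W := fun v N => by
  obtain ⟨t, rfl⟩ := hW v
  exact ⟨t + N * p, by nlinarith, by simpa using hper.nat_mul N t⟩

lemma le_card_visits_mul [DecidableEq V] {W : ℕ → V} {p : ℕ} (hper : Periodic W p) (hp : 0 < p)
    {v : V} {a : ℕ} (ha : W a = v) {G : ℕ} (hlat : latency (fun _ _ => 1) W v ≤ G) :
    p ≤ #{t ∈ range p | W t = v} * G := by
  have ha' : W (a % p) = v := (hper.map_mod_nat a).trans ha
  set last : ℕ → ℕ := fun x => Nat.findGreatest (W · = v) (x + p)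
  have hlast (x : ℕ) : W (last x) = v ∧ last x ≤ x + p ∧ x + p < last x + G := by
    have hv : W (last x) = v :=
      Nat.findGreatest_spec (P := (W · = v)) (n := x + p) (by have := Nat.mod_lt a hp; omega) ha'
    obtain ⟨b, hb, hbG, hbv⟩ := exists_visit_le_add_of_latency_le hlat hv
    refine ⟨hv, Nat.findGreatest_le _, ?_⟩
    by_contra!
    have : b ≤ last x := Nat.le_findGreatest (P := (W · = v)) (by omega) hbv
    omega
  -- `x` is recovered from the residue of its last visit and the time elapsed since then
  have hrec (x : ℕ) (hx : x < p) : x = (last x % p + (x + p - last x)) % p := by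
    rw [Nat.mod_add_mod, Nat.add_sub_cancel' (hlast x).2.1, Nat.add_mod_right, Nat.mod_eq_of_lt hx]
  calc p = #(range p) := (card_range p).symm
    _ ≤ #({t ∈ range p | W t = v} ×ˢ range G) := by
        refine card_le_card_of_injOn (fun x => (last x % p, x + p - last x)) ?_ ?_
        · intro x _
          obtain ⟨hv, hle, hlt⟩ := hlast x
          simp only [coe_product, coe_filter, coe_range, Set.mem_prod, Set.mem_ofPred_eq,
            Set.mem_Iio, hper.map_mod_nat, hv]
          exact ⟨⟨mem_range.2 (Nat.mod_lt _ hp), trivial⟩, by omega⟩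
        · intro x hx y hy hxy
          simp only [coe_range, Set.mem_Iio] at hx hy
          simp only [Prod.mk.injEq] at hxy
          rw [hrec x hx, hrec y hy, hxy.1, hxy.2]
    _ = #{t ∈ range p | W t = v} * G := by rw [card_product, card_range]

end Walks

lemma mul_pow_pred_le_of_shares {s k p : ℕ} (hk : 0 < k) (hp : 0 < p) (c : Fin s × Fin k → ℕ)
    (hsum : ∑ x, c x = p) (hc : ∀ x, p ≤ c x * (s + 1) ^ ((x.2 : ℕ) + 1)) :
    s * (s + 1) ^ (k - 1) ≤ p := by
  obtain ⟨m, rfl⟩ : ∃ m, k = m + 1 := ⟨k - 1, by omega⟩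
  rw [Nat.add_sub_cancel]
  have hlow (d : Fin s) (j : Fin m) :
      p * (s + 1) ^ (m - 1 - j) ≤ c (d, j.castSucc) * (s + 1) ^ m := by
    calc p * (s + 1) ^ (m - 1 - j)
        ≤ c (d, j.castSucc) * (s + 1) ^ ((j : ℕ) + 1) * (s + 1) ^ (m - 1 - j) :=
          Nat.mul_le_mul_right _ (hc _)
      _ = c (d, j.castSucc) * (s + 1) ^ m := by
          rw [mul_assoc, ← pow_add, show (j : ℕ) + 1 + (m - 1 - j) = m by omega]
  have htop (d : Fin s) : (s + 1) ^ m ≤ c (d, Fin.last m) * (s + 1) ^ m := by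
    have := hc (d, Fin.last m)
    exact Nat.le_mul_of_pos_left _ (Nat.pos_of_ne_zero fun h => by simp [h] at this; omega)
  set S := ∑ i ∈ range m, (s + 1) ^ i
  have hgeom : S * s + 1 = (s + 1) ^ m := geom_sum_mul_add s m
  have hS : ∑ j : Fin m, (s + 1) ^ (m - 1 - j) = S := by
    rw [Fin.sum_univ_eq_sum_range (fun j => (s + 1) ^ (m - 1 - j)), sum_range_reflect]
  have key : s * (p * S + (s + 1) ^ m) ≤ p * (s + 1) ^ m :=
    calc s * (p * S + (s + 1) ^ m)
        = ∑ _d : Fin s, (∑ j : Fin m, p * (s + 1) ^ (m - 1 - j) + (s + 1) ^ m) := by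
          rw [← mul_sum, hS, sum_const, card_univ, Fintype.card_fin, smul_eq_mul]
      _ ≤ ∑ d : Fin s, (∑ j : Fin m, c (d, j.castSucc) * (s + 1) ^ m
            + c (d, Fin.last m) * (s + 1) ^ m) :=
          sum_le_sum fun d _ => add_le_add (sum_le_sum fun j _ => hlow d j) (htop d)
      _ = p * (s + 1) ^ m := by
          rw [← hsum, sum_mul, Fintype.sum_prod_type]
          simp only [Fin.sum_univ_castSucc]
  rw [← hgeom] at key ⊢
  nlinarith

namespace RulerTour

variable (s k : ℕ)

/-- `(s + 1)^i ∣ t + 1` says that the last `i` digits of `t` in base `s + 1` are all `s`. -/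
def ruler (t : ℕ) : ℕ := Nat.findGreatest (fun i => (s + 1) ^ i ∣ t + 1) (k - 1)

/-- The cap only bites in the top class `k - 1`, where the digit above the run of `s`s
may be `s`. -/
def rulerDigit (t : ℕ) : ℕ := min (t / (s + 1) ^ ruler s k t % (s + 1)) (s - 1)

variable {s k}

lemma ruler_eq_iff {t j : ℕ} :
    ruler s k t = j ↔
      j ≤ k - 1 ∧ (s + 1) ^ j ∣ t + 1 ∧ (j < k - 1 → ¬(s + 1) ^ (j + 1) ∣ t + 1) := by
  rw [ruler, Nat.findGreatest_eq_iff]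
  constructor
  · rintro ⟨hj, hdvd, hmax⟩
    refine ⟨hj, ?_, fun h => hmax (by omega) h⟩
    rcases Nat.eq_zero_or_pos j with rfl | hj0
    · simp
    · exact hdvd hj0.ne'
  · rintro ⟨hj, hdvd, hmax⟩
    exact ⟨hj, fun _ => hdvd, fun n hjn hn hdn =>
      hmax (by omega) (Nat.pow_dvd_of_le_of_pow_dvd hjn hdn)⟩

lemma ruler_le (t : ℕ) : ruler s k t ≤ k - 1 := Nat.findGreatest_le _

lemma ruler_add_of_dvd {t n : ℕ} (hn : (s + 1) ^ (ruler s k t + 1) ∣ n) :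
    ruler s k (t + n) = ruler s k t := by
  have hiff (i : ℕ) (hi : i ≤ ruler s k t + 1) :
      (s + 1) ^ i ∣ t + n + 1 ↔ (s + 1) ^ i ∣ t + 1 := by
    rw [add_right_comm]
    exact Nat.dvd_add_left ((pow_dvd_pow _ hi).trans hn)
  obtain ⟨hj, hdvd, hmax⟩ := ruler_eq_iff.1 (rfl : ruler s k t = _)
  exact ruler_eq_iff.2
    ⟨hj, (hiff _ (by omega)).2 hdvd, fun h => by rw [hiff _ le_rfl]; exact hmax h⟩

lemma rulerDigit_add_of_dvd {t n : ℕ} (hn : (s + 1) ^ (ruler s k t + 1) ∣ n) :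
    rulerDigit s k (t + n) = rulerDigit s k t := by
  obtain ⟨q, hq⟩ := hn
  have hn' : n = q * (s + 1) * (s + 1) ^ ruler s k t := by rw [hq]; ring
  rw [rulerDigit, rulerDigit, ruler_add_of_dvd ⟨q, hq⟩, hn',
    Nat.add_mul_div_right _ _ (by positivity), Nat.add_mul_mod_self_right]

/-- Time `(d + 1) (s + 1)^j - 1`, written `d s ⋯ s` in base `s + 1`, is assigned to `(d, j)`. -/
lemma ruler_rulerDigit_visit {d j : ℕ} (hd : d < s) (hj : j < k) :
    ruler s k ((d + 1) * (s + 1) ^ j - 1) = j ∧ rulerDigit s k ((d + 1) * (s + 1) ^ j - 1) = d := by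
  have hpos : 0 < (s + 1) ^ j := by positivity
  have hsucc : (d + 1) * (s + 1) ^ j - 1 + 1 = (d + 1) * (s + 1) ^ j := by
    have := Nat.mul_le_mul_right ((s + 1) ^ j) (show 1 ≤ d + 1 by omega)
    omega
  have hruler : ruler s k ((d + 1) * (s + 1) ^ j - 1) = j := by
    refine ruler_eq_iff.2 ⟨by omega, by rw [hsucc]; exact dvd_mul_left _ _, fun _ h => ?_⟩
    rw [hsucc, pow_succ, mul_comm (d + 1), Nat.mul_dvd_mul_iff_left hpos] at h
    exact Nat.not_dvd_of_pos_of_lt (by omega) (by omega) h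
  refine ⟨hruler, ?_⟩
  have hdiv : ((d + 1) * (s + 1) ^ j - 1) / (s + 1) ^ j = d :=
    Nat.div_eq_of_lt_le (by rw [add_mul]; omega) (by omega)
  rw [rulerDigit, hruler, hdiv, Nat.mod_eq_of_lt (by omega), min_eq_left (by omega)]

def rulerWalk (hs : 0 < s) (hk : 0 < k) (t : ℕ) : Fin s × Fin k :=
  (⟨rulerDigit s k t, lt_of_le_of_lt (min_le_right _ _) (by omega)⟩,
    ⟨ruler s k t, lt_of_le_of_lt (ruler_le t) (by omega)⟩)

variable (hs : 0 < s) (hk : 0 < k)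

lemma rulerWalk_add_of_dvd {t n : ℕ} (hn : (s + 1) ^ (ruler s k t + 1) ∣ n) :
    rulerWalk hs hk (t + n) = rulerWalk hs hk t := by
  simp only [rulerWalk, ruler_add_of_dvd hn, rulerDigit_add_of_dvd hn]

lemma rulerWalk_periodic : Periodic (rulerWalk hs hk) ((s + 1) ^ k) := fun t =>
  rulerWalk_add_of_dvd hs hk (pow_dvd_pow _ (by have := ruler_le (s := s) (k := k) t; omega))

lemma rulerWalk_surjective : Surjective (rulerWalk hs hk) := fun ⟨d, j⟩ => by
  obtain ⟨hj, hd⟩ := ruler_rulerDigit_visit (s := s) (k := k) d.2 j.2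
  exact ⟨_, Prod.ext (Fin.ext hd) (Fin.ext hj)⟩

end RulerTour

namespace RulerTour

variable (s k : ℕ)

/-- Vertex `v` lies in class `j = (finProdFinEquiv.symm v).2` (the paper's `V_{j+1}`) and has
weight `(s + 1)^-(j+1)`. -/
noncomputable def weight (v : Fin (s * k)) : ℝ≥0∞ :=
  (((s + 1) ^ ((finProdFinEquiv.symm v).2 + 1 : ℕ) : ℕ) : ℝ≥0∞)⁻¹

variable {s k}

lemma weight_ne_zero (v : Fin (s * k)) : weight s k v ≠ 0 :=
  ENNReal.inv_ne_zero.2 (ENNReal.natCast_ne_top _)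

lemma weight_ne_top (v : Fin (s * k)) : weight s k v ≠ ∞ :=
  ENNReal.inv_ne_top.2 (Nat.cast_ne_zero.2 (by positivity))

lemma weight_le_one (v : Fin (s * k)) : weight s k v ≤ 1 :=
  ENNReal.inv_le_one.2 (Nat.one_le_cast.2 (Nat.one_le_pow _ _ (Nat.succ_pos s)))

lemma walkCost_le_one_iff_latency_le {W : ℕ → Fin (s * k)} :
    walkCost (fun _ _ => 1) (weight s k) W ≤ 1 ↔
      ∀ v, latency (fun _ _ => 1) W v ≤ ((s + 1) ^ ((finProdFinEquiv.symm v).2 + 1 : ℕ) : ℕ) := by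
  simp only [walkCost_le_one_iff weight_ne_zero weight_ne_top, weight, inv_inv]

lemma le_period_of_walkCost_le_one (hk : 0 < k) {W : ℕ → Fin (s * k)}
    (hvis : VisitsInfOften W) (hcost : walkCost (fun _ _ => 1) (weight s k) W ≤ 1)
    {p : ℕ} (hp : 0 < p) (hper : Periodic W p) : s * (s + 1) ^ (k - 1) ≤ p := by
  have hsum : ∑ v, #{t ∈ range p | W t = v} = p := by
    rw [← card_eq_sum_card_fiberwise (by simp), card_range]
  refine mul_pow_pred_le_of_shares hk hp (fun x => #{t ∈ range p | W t = finProdFinEquiv x})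
    (by rwa [finProdFinEquiv.sum_comp (fun v => #{t ∈ range p | W t = v})]) fun x => ?_
  obtain ⟨a, -, ha⟩ := hvis (finProdFinEquiv x) 0
  have hlat := walkCost_le_one_iff_latency_le.1 hcost (finProdFinEquiv x)
  rw [Equiv.symm_apply_apply] at hlat
  exact le_card_visits_mul hper hp ha hlat

variable (hs : 0 < s) (hk : 0 < k)

def tour : ℕ → Fin (s * k) := finProdFinEquiv ∘ rulerWalk hs hk

lemma tour_visitsInfOften : VisitsInfOften (tour hs hk) :=
  ((rulerWalk_periodic hs hk).comp _).visitsInfOften (by positivity)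
    (finProdFinEquiv.surjective.comp (rulerWalk_surjective hs hk))

lemma walkCost_tour_le_one : walkCost (fun _ _ => 1) (weight s k) (tour hs hk) ≤ 1 := by
  refine walkCost_le_one_iff_latency_le.2 fun v => latency_le_of_forall_add (by positivity) ?_
  rintro a rfl
  simp only [tour, comp_apply, Equiv.symm_apply_apply]
  exact congrArg _ (rulerWalk_add_of_dvd hs hk dvd_rfl)

end RulerTour

/-- For every k and every n = s·k there is a graph on n vertices with unit edge lengths
such that OPT ≤ 1 but every infinite walk of cost at most 1 has kernel of size at least
(s+1)^(k-1). -/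
theorem exponential_kernel_lower_bound (k s : ℕ) (hk : 1 ≤ k) (hs : 1 ≤ s) :
    ∃ (A : Fin (s * k) → Fin (s * k) → Prop) (l : Fin (s * k) → Fin (s * k) → ℝ≥0∞)
      (φ : Fin (s * k) → ℝ≥0∞),
      (∀ u v, A u v → A v u) ∧ (∀ u v, A u v → l u v = 1) ∧
      (∀ v, 0 < φ v ∧ φ v ≤ 1) ∧
      OPTg A l φ ≤ 1 ∧
      ∀ W : ℕ → Fin (s * k), (∀ i, A (W i) (W (i + 1))) → VisitsInfOften W →
        walkCost l φ W ≤ 1 →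
        ∀ p : ℕ, 0 < p → (∀ i, W (i + p) = W i) → (s + 1) ^ (k - 1) ≤ p := by
  refine ⟨fun _ _ => True, fun _ _ => 1, RulerTour.weight s k, fun _ _ _ => trivial,
    fun _ _ _ => rfl, fun v => ⟨pos_iff_ne_zero.2 (RulerTour.weight_ne_zero v),
      RulerTour.weight_le_one v⟩, ?_, ?_⟩
  · exact iInf₂_le_of_le (RulerTour.tour hs hk)
      ⟨fun _ => trivial, RulerTour.tour_visitsInfOften hs hk⟩ (RulerTour.walkCost_tour_le_one hs hk)
  · intro W _ hvis hcost p hp hper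
    exact (Nat.le_mul_of_pos_left _ hs).trans
      (RulerTour.le_period_of_walkCost_le_one hk hvis hcost hp hper)
end
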